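/- For real numbers a > 0 and b₁, b₂, b₃, the integral over all real t of Φ(at+b₁)·(Φ(at+b₂)−Φ(at+b₃)) dt equals (−√2/a)·[((b₁−b₂)/√2)·Φ((b₁−b₂)/√2) + φ((b₁−b₂)/√2) − ((b₁−b₃)/√2)·Φ((b₁−b₃)/√2) − φ((b₁−b₃)/√2)]. -/

import Mathlib

open MeasureTheory Real Filter

noncomputable def phi (t : ℝ) : ℝ := Real.exp (-t^2/2) / Real.sqrt (2*Real.pi)

noncomputable def Phi (x : ℝ) : ℝ := ∫ s in Set.Iic x, phi s

/-!
Writing `Phi x₂ - Phi x₃` as `∫ u in x₃..x₂, phi u` and exchanging the integrals turns the left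
side into `∫ u in b₃..b₂, ∫ t, Phi (a t + b₁) phi (a t + u)`. After the substitution
`s = -(a t + u)` the inner integral is `a⁻¹ P(X - Y ≤ b₁ - u)` for independent standard normal `X`,
`Y`; as `X - Y ~ N(0, 2)` this is `a⁻¹ Phi ((b₁ - u) / √2)`. Finally, since `phi' v = -v phi v`,
`v Phi v + phi v` is an antiderivative of `Phi`.
-/

open ProbabilityTheory Set Function

theorem MeasureTheory.Measure.conv_apply_Iic (μ ν : Measure ℝ) [SFinite ν] (c : ℝ) :
    (μ ∗ ν) (Iic c) = ∫⁻ x, ν (Iic (c - x)) ∂μ := by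
  rw [Measure.conv, Measure.map_apply measurable_add measurableSet_Iic,
    Measure.prod_apply (measurable_add measurableSet_Iic)]
  congr with x
  congr with y
  simp [le_sub_iff_add_le']

lemma gaussianReal_zero_two_eq_map : gaussianReal 0 2 = (gaussianReal 0 1).map (√2 * ·) := by
  rw [gaussianReal_map_const_mul, mul_zero, mul_one]
  congr
  ext
  simp

lemma phi_eq_gaussianPDFReal : phi = gaussianPDFReal 0 1 := by
  ext t
  simp [phi, gaussianPDFReal, div_eq_inv_mul]

lemma phi_nonneg (t : ℝ) : 0 ≤ phi t := by
  rw [phi_eq_gaussianPDFReal]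
  exact gaussianPDFReal_nonneg _ _ _

lemma phi_neg (t : ℝ) : phi (-t) = phi t := by simp [phi]

lemma continuous_phi : Continuous phi := by unfold phi; fun_prop

lemma integrable_phi : Integrable phi := by
  rw [phi_eq_gaussianPDFReal]
  exact integrable_gaussianPDFReal _ _

lemma hasDerivAt_phi (t : ℝ) : HasDerivAt phi (-t * phi t) t := by
  have h : HasDerivAt (fun s : ℝ => -s ^ 2 / 2) (-t) t :=
    ((hasDerivAt_pow 2 t).neg.div_const 2).congr_deriv (by push_cast; ring)
  exact (h.exp.div_const _).congr_deriv (by rw [phi]; ring)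

lemma Phi_eq_measureReal (x : ℝ) : Phi x = (gaussianReal 0 1).real (Iic x) := by
  rw [measureReal_def, gaussianReal_apply_eq_integral _ one_ne_zero,
    ENNReal.toReal_ofReal (integral_nonneg fun _ => gaussianPDFReal_nonneg _ _ _), Phi,
    phi_eq_gaussianPDFReal]

lemma Phi_nonneg (x : ℝ) : 0 ≤ Phi x := by
  rw [Phi_eq_measureReal]
  exact measureReal_nonneg

lemma Phi_le_one (x : ℝ) : Phi x ≤ 1 := by
  rw [Phi_eq_measureReal]
  exact measureReal_le_one

lemma Phi_sub_Phi_eq_integral (x y : ℝ) : Phi x - Phi y = ∫ u in y..x, phi u :=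
  intervalIntegral.integral_Iic_sub_Iic integrable_phi.integrableOn integrable_phi.integrableOn

lemma hasDerivAt_Phi (x : ℝ) : HasDerivAt Phi (phi x) x := by
  have h : HasDerivAt (fun y => (∫ u in (0:ℝ)..y, phi u) + Phi 0) (phi x) x :=
    (intervalIntegral.integral_hasDerivAt_right integrable_phi.intervalIntegrable
      (continuous_phi.stronglyMeasurableAtFilter _ _) continuous_phi.continuousAt).add_const _
  convert h using 1
  ext y
  rw [← Phi_sub_Phi_eq_integral, sub_add_cancel]

lemma continuous_Phi : Continuous Phi :=
  continuous_iff_continuousAt.2 fun x => (hasDerivAt_Phi x).continuousAt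

lemma integral_Phi_sub_mul_phi (c : ℝ) : ∫ s, Phi (c - s) * phi s = Phi (c / √2) := by
  set N := gaussianReal 0 1
  have hN : ∫ s, Phi (c - s) * phi s = ∫ s, Phi (c - s) ∂N := by
    rw [integral_gaussianReal_eq_integral_smul one_ne_zero, phi_eq_gaussianPDFReal]
    simp_rw [smul_eq_mul, mul_comm]
  have hmeas : Measurable fun s => N (Iic (c - s)) :=
    Antitone.measurable fun x y hxy => measure_mono (Iic_subset_Iic.2 (by linarith))
  have hsqrt : (√2 * ·) ⁻¹' Iic c = Iic (c / √2) := by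
    ext x
    simp [le_div_iff₀ (by positivity : (0:ℝ) < √2), mul_comm]
  calc ∫ s, Phi (c - s) * phi s = ∫ s, (N (Iic (c - s))).toReal ∂N := by
        rw [hN]
        simp_rw [Phi_eq_measureReal, measureReal_def]
        rfl
    _ = ((N ∗ N) (Iic c)).toReal := by
        rw [integral_toReal hmeas.aemeasurable (ae_of_all _ fun _ => measure_lt_top _ _),
          Measure.conv_apply_Iic]
    _ = Phi (c / √2) := by
        rw [gaussianReal_conv_gaussianReal, zero_add, one_add_one_eq_two,
          gaussianReal_zero_two_eq_map, Measure.map_apply (by fun_prop) measurableSet_Iic, hsqrt,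
          Phi_eq_measureReal, measureReal_def]

lemma integrable_phi_affine {a : ℝ} (ha : 0 < a) (u : ℝ) :
    Integrable fun t => phi (a * t + u) :=
  (integrable_phi.comp_add_right u).comp_mul_left' ha.ne'

lemma integral_phi_affine {a : ℝ} (ha : 0 < a) (u : ℝ) : ∫ t, phi (a * t + u) = a⁻¹ := by
  rw [Measure.integral_comp_mul_left (fun y => phi (y + u)), integral_add_right_eq_self,
    phi_eq_gaussianPDFReal, integral_gaussianPDFReal_eq_one _ one_ne_zero,
    abs_of_pos (inv_pos.2 ha), smul_eq_mul, mul_one]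

lemma integral_Phi_mul_phi_affine {a : ℝ} (ha : 0 < a) (b u : ℝ) :
    ∫ t, Phi (a * t + b) * phi (a * t + u) = a⁻¹ * Phi ((b - u) / √2) := by
  -- substitute `y = -(a t + u)`, using the symmetry of `phi`
  set g : ℝ → ℝ := fun y => Phi (b - u - (y - u)) * phi (y - u)
  have h : (fun t => Phi (a * t + b) * phi (a * t + u)) = fun t => g (-a * t) := by
    ext t
    simp only [g, ← phi_neg (a * t + u)]
    ring_nf
  rw [h, Measure.integral_comp_mul_left g,
    integral_sub_right_eq_self (fun y => Phi (b - u - y) * phi y), integral_Phi_sub_mul_phi,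
    inv_neg, abs_neg, abs_of_pos (inv_pos.2 ha), smul_eq_mul]

lemma integrable_Phi_mul_phi_affine_prod {a : ℝ} (ha : 0 < a) (b m M : ℝ) :
    Integrable (uncurry fun u t => Phi (a * t + b) * phi (a * t + u))
      ((volume.restrict (uIoc m M)).prod volume) := by
  have hbound : Integrable (fun p : ℝ × ℝ => phi (a * p.2 + p.1))
      ((volume.restrict (uIoc m M)).prod volume) := by
    refine (integrable_prod_iff (continuous_phi.comp (by fun_prop)).aestronglyMeasurable).2
      ⟨ae_of_all _ fun u => integrable_phi_affine ha u, ?_⟩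
    simp only [comp_apply, Real.norm_of_nonneg (phi_nonneg _), integral_phi_affine ha]
    exact integrableOn_const measure_Ioc_lt_top.ne
  refine hbound.mono' ((continuous_Phi.comp (by fun_prop)).mul
    (continuous_phi.comp (by fun_prop))).aestronglyMeasurable (ae_of_all _ fun p => ?_)
  rw [uncurry_apply_pair, norm_mul, Real.norm_of_nonneg (Phi_nonneg _),
    Real.norm_of_nonneg (phi_nonneg _)]
  exact mul_le_of_le_one_left (phi_nonneg _) (Phi_le_one _)

noncomputable def antiderivPhi (x : ℝ) : ℝ := x * Phi x + phi x

lemma hasDerivAt_antiderivPhi (x : ℝ) : HasDerivAt antiderivPhi (Phi x) x :=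
  (((hasDerivAt_id' x).mul (hasDerivAt_Phi x)).add (hasDerivAt_phi x)).congr_deriv
    (by ring)

lemma integral_Phi_sub_div_sqrt_two (b x y : ℝ) :
    ∫ u in x..y, Phi ((b - u) / √2) =
      -√2 * (antiderivPhi ((b - y) / √2) - antiderivPhi ((b - x) / √2)) := by
  have hderiv (u : ℝ) : HasDerivAt (fun u => -√2 * antiderivPhi ((b - u) / √2))
      (Phi ((b - u) / √2)) u :=
    (((hasDerivAt_antiderivPhi _).comp u
      (((hasDerivAt_id' u).const_sub b).div_const √2)).const_mul (-√2)).congr_deriv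
      (by field_simp)
  rw [intervalIntegral.integral_eq_sub_of_hasDerivAt (fun u _ => hderiv u)
    ((continuous_Phi.comp (by fun_prop)).intervalIntegrable _ _)]
  ring

theorem stmt5 (a b₁ b₂ b₃ : ℝ) (ha : 0 < a) :
    ∫ t : ℝ, Phi (a * t + b₁) * (Phi (a * t + b₂) - Phi (a * t + b₃)) =
      (-Real.sqrt 2 / a) *
        (((b₁ - b₂) / Real.sqrt 2) * Phi ((b₁ - b₂) / Real.sqrt 2) +
          phi ((b₁ - b₂) / Real.sqrt 2) -
          ((b₁ - b₃) / Real.sqrt 2) * Phi ((b₁ - b₃) / Real.sqrt 2) -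
          phi ((b₁ - b₃) / Real.sqrt 2)) := by
  have hsplit (t : ℝ) : Phi (a * t + b₁) * (Phi (a * t + b₂) - Phi (a * t + b₃))
      = ∫ u in b₃..b₂, Phi (a * t + b₁) * phi (a * t + u) := by
    rw [intervalIntegral.integral_const_mul, Phi_sub_Phi_eq_integral,
      intervalIntegral.integral_comp_add_left phi (a * t)]
  calc _ = ∫ t, ∫ u in b₃..b₂, Phi (a * t + b₁) * phi (a * t + u) := by simp_rw [hsplit]
    _ = ∫ u in b₃..b₂, ∫ t, Phi (a * t + b₁) * phi (a * t + u) :=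
        (intervalIntegral_integral_swap (integrable_Phi_mul_phi_affine_prod ha b₁ b₃ b₂)).symm
    _ = a⁻¹ * ∫ u in b₃..b₂, Phi ((b₁ - u) / √2) := by
        simp_rw [integral_Phi_mul_phi_affine ha, intervalIntegral.integral_const_mul]
    _ = _ := by
        rw [integral_Phi_sub_div_sqrt_two, antiderivPhi, antiderivPhi]
        ring
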